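/- Let G₁ and G₂ be groups with automatic structures L₁ ⊆ A* for π₁ : A* → G₁ and L₂ ⊆ B* for π₂ : B* → G₂. Then the convolution L₁ ⋄ L₂ ⊆ C* is an automatic structure for the natural monoid homomorphism π₃ : C* → G₁ × G₂; in particular, the direct product of two automatic groups is automatic. -/

import Mathlib

open scoped NNReal

namespace Auto

/-- The generating set `Aπ ∪ (Aπ)⁻¹` of `G` determined by `π : A* → G`. -/
def gens {A G : Type*} [Group G] (π : FreeMonoid A →* G) : Set G :=
  (Set.range fun a : A => π (FreeMonoid.of a)) ∪
    Set.range fun a : A => (π (FreeMonoid.of a))⁻¹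

/-- The word metric `d_A` on `G`: the least `n` such that `g⁻¹h` is a product of `n`
elements of `Aπ ∪ (Aπ)⁻¹`. -/
noncomputable def wdist {A G : Type*} [Group G] (π : FreeMonoid A →* G) (g h : G) : ℕ :=
  sInf {n : ℕ | ∃ l : List G, l.length = n ∧ (∀ x ∈ l, x ∈ gens π) ∧ l.prod = g⁻¹ * h}

/-- Evaluation of a word of `A*` in `G`. -/
def evalW {A G : Type*} [Group G] (π : FreeMonoid A →* G) (w : List A) : G :=
  π (FreeMonoid.ofList w)

/-- `u` and `v` `p`-fellow travel: `d_A(u^[n]π, v^[n]π) ≤ p` for all `n`. -/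
def FellowTravel {A G : Type*} [Group G] (π : FreeMonoid A →* G) (p : ℝ≥0)
    (u v : List A) : Prop :=
  ∀ n : ℕ, (wdist π (evalW π (u.take n)) (evalW π (v.take n)) : ℝ≥0) ≤ p

/-- `u` and `v` are `p`-meeting-fellow-travellers. -/
def MFT {A G : Type*} [Group G] (π : FreeMonoid A →* G) (p : ℝ≥0) (u v : List A) : Prop :=
  FellowTravel π p u v ∧ evalW π u = evalW π v

/-- A language is regular if it is accepted by a finite-state automaton. -/
def IsRegular {A : Type*} (L : Language A) : Prop :=
  ∃ (σ : Type) (_ : Fintype σ) (M : DFA A σ), M.accepts = L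

/-- `L` is an automatic structure for `π`. -/
structure IsAutomaticStructure {A G : Type*} [Group G] (π : FreeMonoid A →* G)
    (L : Language A) : Prop where
  regular : IsRegular L
  onto : ∀ g : G, ∃ w ∈ L, evalW π w = g
  ft : ∃ N : ℕ, ∀ u ∈ L, ∀ v ∈ L,
    wdist π (evalW π u) (evalW π v) ≤ 1 → FellowTravel π N u v

/-- Evaluation of an element of `A ∪ {ε}`. -/
def evalOpt {A G : Type*} [Group G] (π : FreeMonoid A →* G) : Option A → G
  | none => 1
  | some a => π (FreeMonoid.of a)

/-- `L` is a biautomatic structure for `π`. -/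
structure IsBiautomaticStructure {A G : Type*} [Group G] (π : FreeMonoid A →* G)
    (L : Language A) extends IsAutomaticStructure π L : Prop where
  bi : ∃ N : ℕ, ∀ u ∈ L, ∀ v ∈ L, ∀ a : Option A,
    evalW π v = evalOpt π a * evalW π u →
    ∀ n : ℕ, wdist π (evalOpt π a * evalW π (u.take n)) (evalW π (v.take n)) ≤ N

/-- A language is factorial if it is closed under taking factors. -/
def IsFactorial {A : Type*} (L : Language A) : Prop :=
  ∀ u ∈ L, ∀ v : List A, v <:+: u → v ∈ L

/-- `D : ℝ≥0 → ℝ≥0` is a departure function for `(G, L)`. -/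
def IsDepartureFunction {A G : Type*} [Group G] (π : FreeMonoid A →* G) (L : Language A)
    (D : ℝ≥0 → ℝ≥0) : Prop :=
  ∀ w ∈ L, ∀ r : ℝ≥0, ∀ s t : ℕ, D r ≤ (t : ℝ≥0) → s + t ≤ w.length →
    r < (wdist π (evalW π (w.take s)) (evalW π (w.take (s + t))) : ℝ≥0)

/-- Every point of `S` is within distance `N` of `T`. -/
def NbhdIn {A G : Type*} [Group G] (π : FreeMonoid A →* G) (N : ℕ) (S T : Set G) : Prop :=
  ∀ s ∈ S, ∃ t ∈ T, wdist π s t ≤ N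

/-- The Hausdorff distance between `S` and `T` is at most `N`. -/
def HausdorffLE {A G : Type*} [Group G] (π : FreeMonoid A →* G) (N : ℕ)
    (S T : Set G) : Prop :=
  NbhdIn π N S T ∧ NbhdIn π N T S

/-- `H` is an `L`-quasiconvex subgroup of `G`. -/
def IsQuasiconvex {A G : Type*} [Group G] (π : FreeMonoid A →* G) (L : Language A)
    (H : Subgroup G) : Prop :=
  ∃ k : ℕ, ∀ h ∈ H, ∀ h' ∈ H, ∀ w ∈ L, h * evalW π w = h' →
    ∀ n : ℕ, ∃ z ∈ H, wdist π (h * evalW π (w.take n)) z ≤ k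

/-- The bounded reduction property for `(φ, L, L')`. -/
def BRP {A B G G' : Type*} [Group G] [Group G'] (π : FreeMonoid A →* G)
    (π' : FreeMonoid B →* G') (φ : G →* G') (L : Language A) (L' : Language B) : Prop :=
  ∃ N : ℕ, ∀ x : G, ∀ α ∈ L, ∀ β ∈ L', evalW π' β = φ (evalW π α) →
    HausdorffLE π' N (Set.range fun n : ℕ => φ (x * evalW π (α.take n)))
      (Set.range fun n : ℕ => φ x * evalW π' (β.take n))

/-- The synchronous bounded reduction property for `(φ, L, L')`. -/
def SyncBRP {A B G G' : Type*} [Group G] [Group G'] (π : FreeMonoid A →* G)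
    (π' : FreeMonoid B →* G') (φ : G →* G') (L : Language A) (L' : Language B) : Prop :=
  ∃ N : ℕ, ∀ x : G, ∀ α ∈ L, ∀ β ∈ L', evalW π' β = φ (evalW π α) →
    ∀ n : ℕ, wdist π' (φ (x * evalW π (α.take n))) (φ x * evalW π' (β.take n)) ≤ N

/-- The fellow traveller bounded reduction property (FT-BRP) for `(φ, L, L')`. -/
def FTBRP {A B G G' : Type*} [Group G] [Group G'] (π : FreeMonoid A →* G)
    (π' : FreeMonoid B →* G') (φ : G →* G') (L : Language A) (L' : Language B) : Prop :=
  ∀ p : ℝ≥0, ∃ q : ℝ≥0,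
    ∀ u₁ ∈ L, ∀ u₂ ∈ L, ∀ u₃ ∈ L, ∀ u₁' ∈ L', ∀ u₂' ∈ L', ∀ u₃' ∈ L',
      evalW π' u₁' = φ (evalW π u₁) → evalW π' u₂' = φ (evalW π u₂) →
        evalW π' u₃' = φ (evalW π u₃) →
          MFT π p (u₁ ++ u₂) u₃ → MFT π' q (u₁' ++ u₂') u₃'

/-- The natural homomorphism `(A ⊔ B)* → G` agreeing with `π₁` on `A` and `π₂` on `B`. -/
def sumHom {A B G : Type*} [Group G] (π₁ : FreeMonoid A →* G) (π₂ : FreeMonoid B →* G) :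
    FreeMonoid (A ⊕ B) →* G :=
  FreeMonoid.lift (Sum.elim (fun a => π₁ (FreeMonoid.of a)) fun b => π₂ (FreeMonoid.of b))

/-- The union `L₁ ∪ L₂` viewed as a language over `A ⊔ B`. -/
def unionLang {A B : Type*} (L₁ : Language A) (L₂ : Language B) : Language (A ⊕ B) :=
  {w : List (A ⊕ B) | (∃ u ∈ L₁, w = u.map Sum.inl) ∨ ∃ v ∈ L₂, w = v.map Sum.inr}

/-- `L` is an asynchronous automatic structure for `π`. -/
def IsAsyncAutomaticStructure {A G : Type*} [Group G] (π : FreeMonoid A →* G)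
    (L : Language A) : Prop :=
  IsRegular L ∧ (∀ g : G, ∃ w ∈ L, evalW π w = g) ∧
    ∃ p : ℕ, ∀ u ∈ L, ∀ v ∈ L, wdist π (evalW π u) (evalW π v) ≤ 1 →
      ∃ φ ψ : ℕ → ℕ, Monotone φ ∧ Monotone ψ ∧
        Function.Surjective φ ∧ Function.Surjective ψ ∧
          ∀ t : ℕ, wdist π (evalW π (u.take (φ t))) (evalW π (v.take (ψ t))) ≤ p

/-- `L₁` and `L₂` are equivalent automatic structures. -/
def LangEquivalent {A B G : Type*} [Group G] (π₁ : FreeMonoid A →* G)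
    (π₂ : FreeMonoid B →* G) (L₁ : Language A) (L₂ : Language B) : Prop :=
  IsAsyncAutomaticStructure (sumHom π₁ π₂) (unionLang L₁ L₂)

/-- `L₁` and `L₂` are synchronously equivalent automatic structures. -/
def LangSyncEquivalent {A B G : Type*} [Group G] (π₁ : FreeMonoid A →* G)
    (π₂ : FreeMonoid B →* G) (L₁ : Language A) (L₂ : Language B) : Prop :=
  IsAutomaticStructure (sumHom π₁ π₂) (unionLang L₁ L₂)

/-- `L` has the Hausdorff closeness property. -/
def HausClose {A G : Type*} [Group G] (π : FreeMonoid A →* G) (L : Language A) : Prop :=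
  ∃ N : ℕ, ∀ u ∈ L, ∀ v ∈ L, wdist π (evalW π u) (evalW π v) ≤ 1 →
    HausdorffLE π N (Set.range fun n : ℕ => evalW π (u.take n))
      (Set.range fun n : ℕ => evalW π (v.take n))

/-- The padded alphabet `C = (A×B) ∪ (A×{$}) ∪ ({$}×B)` of convolution. -/
abbrev ConvAlphabet (A B : Type*) := (A × B) ⊕ (A ⊕ B)

/-- The convolution `u ⋄ v` of two words. -/
def conv {A B : Type*} : List A → List B → List (ConvAlphabet A B)
  | [], [] => []
  | [], b :: v => Sum.inr (Sum.inr b) :: conv [] v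
  | a :: u, [] => Sum.inr (Sum.inl a) :: conv u []
  | a :: u, b :: v => Sum.inl (a, b) :: conv u v
  termination_by u v => u.length + v.length

/-- The convolution `L₁ ⋄ L₂` of two languages. -/
def convLang {A B : Type*} (L₁ : Language A) (L₂ : Language B) :
    Language (ConvAlphabet A B) :=
  {w : List (ConvAlphabet A B) | ∃ u ∈ L₁, ∃ v ∈ L₂, w = conv u v}

/-- The natural homomorphism `C* → G × G'` for the convolution alphabet. -/
def convHom {A B G G' : Type*} [Group G] [Group G'] (π₁ : FreeMonoid A →* G)
    (π₂ : FreeMonoid B →* G') : FreeMonoid (ConvAlphabet A B) →* G × G' :=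
  FreeMonoid.lift fun c =>
    match c with
    | Sum.inl (a, b) => (π₁ (FreeMonoid.of a), π₂ (FreeMonoid.of b))
    | Sum.inr (Sum.inl a) => (π₁ (FreeMonoid.of a), 1)
    | Sum.inr (Sum.inr b) => (1, π₂ (FreeMonoid.of b))

/-- A group is automatic if it admits an automatic structure over some finite alphabet. -/
def IsAutomaticGroup (G : Type*) [Group G] : Prop :=
  ∃ (A : Type) (_ : Fintype A) (π : FreeMonoid A →* G) (L : Language A),
    IsAutomaticStructure π L

end Auto

open Auto

/-! A letter of the padded alphabet moves each coordinate of `G₁ × G₂` by at most one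
generator, and a generator of either factor is the image of a padded letter `(a, $)` or `($, b)`;
hence the word metric of the product lies between the maximum and the sum of the metrics of the
factors. Since `(u₁ ⋄ u₂)^[n] = u₁^[n] ⋄ u₂^[n]` evaluates to the pair of prefixes, convolutions
of `N₁`- and `N₂`-fellow travellers are `(N₁ + N₂)`-fellow travellers. For regularity, `L₁ ⋄ L₂`
consists of the words with padding pattern `(A × B)* (A* ∪ B*)` whose two projections (erasing
`$`) lie in `L₁` and `L₂`, and each of these three conditions is recognised by a finite
automaton. -/

theorem Language.IsRegular.preimage_filterMap {α β : Type*} {L : Language β}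
    (hL : L.IsRegular) (f : α → Option β) :
    Language.IsRegular {w : List α | w.filterMap f ∈ L} := by
  obtain ⟨σ, _, M, rfl⟩ := hL
  let M' : DFA α σ := ⟨fun s a => (f a).elim s (M.step s), M.start, M.accept⟩
  have heval : ∀ s w, M'.evalFrom s w = M.evalFrom s (w.filterMap f) := by
    intro s w
    induction w generalizing s with
    | nil => rfl
    | cons a w ih => cases h : f a <;> simp [M', h, ih]
  refine ⟨σ, ‹_›, M', Set.ext fun w => ?_⟩
  change M'.evalFrom M.start w ∈ M.accept ↔ M.evalFrom M.start _ ∈ M.accept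
  rw [heval]

namespace Auto

section WordMetric

variable {A A' G G' : Type*} [Group G] [Group G'] {π : FreeMonoid A →* G}

@[simp]
lemma evalW_nil (π : FreeMonoid A →* G) : evalW π [] = 1 :=
  map_one π

@[simp]
lemma evalW_cons (π : FreeMonoid A →* G) (a : A) (w : List A) :
    evalW π (a :: w) = π (FreeMonoid.of a) * evalW π w :=
  map_mul π (FreeMonoid.of a) (FreeMonoid.ofList w)

lemma IsAutomaticStructure.surjective {L : Language A} (h : IsAutomaticStructure π L) :
    Function.Surjective π := fun g =>
  let ⟨w, _, hw⟩ := h.onto g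
  ⟨FreeMonoid.ofList w, hw⟩

lemma inv_mem_gens {x : G} (hx : x ∈ gens π) : x⁻¹ ∈ gens π := by
  rcases hx with ⟨a, rfl⟩ | ⟨a, rfl⟩
  · exact Or.inr ⟨a, rfl⟩
  · exact Or.inl ⟨a, (inv_inv _).symm⟩

lemma wdist_le_length {g h : G} (l : List G) (hl : ∀ x ∈ l, x ∈ gens π)
    (hprod : l.prod = g⁻¹ * h) : wdist π g h ≤ l.length :=
  Nat.sInf_le ⟨l, rfl, hl, hprod⟩

lemma exists_length_eq_wdist (hπ : Function.Surjective π) (g h : G) :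
    ∃ l : List G, l.length = wdist π g h ∧ (∀ x ∈ l, x ∈ gens π) ∧ l.prod = g⁻¹ * h := by
  obtain ⟨w, hw⟩ := hπ (g⁻¹ * h)
  have hne : {n | ∃ l : List G, l.length = n ∧ (∀ x ∈ l, x ∈ gens π) ∧
      l.prod = g⁻¹ * h}.Nonempty := by
    refine ⟨_, w.toList.map (π ∘ FreeMonoid.of), rfl, by simp [gens], ?_⟩
    rw [← hw, ← FreeMonoid.lift_apply, FreeMonoid.lift_restrict]
  exact Nat.sInf_mem hne

lemma wdist_congr {g h g' h' : G} (hgh : g⁻¹ * h = g'⁻¹ * h') :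
    wdist π g h = wdist π g' h' := by
  rw [wdist, wdist, hgh]

lemma wdist_triangle (hπ : Function.Surjective π) (g h k : G) :
    wdist π g k ≤ wdist π g h + wdist π h k := by
  obtain ⟨l₁, hlen₁, hl₁, hprod₁⟩ := exists_length_eq_wdist hπ g h
  obtain ⟨l₂, hlen₂, hl₂, hprod₂⟩ := exists_length_eq_wdist hπ h k
  calc wdist π g k ≤ (l₁ ++ l₂).length :=
        wdist_le_length _ (by simpa using fun x => Or.rec (hl₁ x) (hl₂ x))
          (by rw [List.prod_append, hprod₁, hprod₂]; group)
    _ = wdist π g h + wdist π h k := by rw [List.length_append, hlen₁, hlen₂]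

lemma wdist_map_le (hπ : Function.Surjective π) {π' : FreeMonoid A' →* G'} (f : G →* G')
    (hf : ∀ a, f (π (FreeMonoid.of a)) ∈ gens π' ∨ f (π (FreeMonoid.of a)) = 1) (g h : G) :
    wdist π' (f g) (f h) ≤ wdist π g h := by
  classical
  have hgens : ∀ x ∈ gens π, f x ∈ gens π' ∨ f x = 1 := by
    rintro x (⟨a, rfl⟩ | ⟨a, rfl⟩)
    · exact hf a
    · rw [map_inv]
      exact (hf a).imp inv_mem_gens (by simp +contextual)
  obtain ⟨l, hlen, hl, hprod⟩ := exists_length_eq_wdist hπ g h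
  calc wdist π' (f g) (f h) ≤ ((l.map f).filter (· != 1)).length := by
        refine wdist_le_length _ ?_ (by rw [List.prod_filter_bne_one, ← map_list_prod, hprod,
          map_mul, map_inv])
        simp only [List.mem_filter, List.mem_map, bne_iff_ne]
        rintro _ ⟨⟨x, hx, rfl⟩, hne⟩
        exact (hgens x (hl x hx)).resolve_right hne
    _ ≤ wdist π g h := hlen ▸ (List.length_filter_le _ _).trans (List.length_map _).le

end WordMetric

section Convolution

variable {A B G₁ G₂ : Type*} [Group G₁] [Group G₂]

lemma conv_take (u : List A) (v : List B) (n : ℕ) :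
    (conv u v).take n = conv (u.take n) (v.take n) := by
  fun_induction conv u v generalizing n <;> cases n <;> simp [conv, *]

lemma evalW_conv (π₁ : FreeMonoid A →* G₁) (π₂ : FreeMonoid B →* G₂) (u : List A) (v : List B) :
    evalW (convHom π₁ π₂) (conv u v) = (evalW π₁ u, evalW π₂ v) := by
  fun_induction conv u v <;> simp_all [convHom, Prod.one_eq_mk]

lemma convHom_surjective {π₁ : FreeMonoid A →* G₁} {π₂ : FreeMonoid B →* G₂}
    (hπ₁ : Function.Surjective π₁) (hπ₂ : Function.Surjective π₂) :
    Function.Surjective (convHom π₁ π₂) := by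
  rintro ⟨g₁, g₂⟩
  obtain ⟨u, rfl⟩ := hπ₁ g₁
  obtain ⟨v, rfl⟩ := hπ₂ g₂
  exact ⟨FreeMonoid.ofList (conv u.toList v.toList), evalW_conv π₁ π₂ _ _⟩

end Convolution

section ProductMetric

variable {A B G₁ G₂ : Type*} [Group G₁] [Group G₂]
  {π₁ : FreeMonoid A →* G₁} {π₂ : FreeMonoid B →* G₂}

lemma wdist_fst_le_wdist_convHom (hπ : Function.Surjective (convHom π₁ π₂)) (g h : G₁ × G₂) :
    wdist π₁ g.1 h.1 ≤ wdist (convHom π₁ π₂) g h :=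
  wdist_map_le hπ (MonoidHom.fst G₁ G₂) (by rintro (⟨a, b⟩ | a | b) <;> simp [convHom, gens]) g h

lemma wdist_snd_le_wdist_convHom (hπ : Function.Surjective (convHom π₁ π₂)) (g h : G₁ × G₂) :
    wdist π₂ g.2 h.2 ≤ wdist (convHom π₁ π₂) g h :=
  wdist_map_le hπ (MonoidHom.snd G₁ G₂) (by rintro (⟨a, b⟩ | a | b) <;> simp [convHom, gens]) g h

lemma wdist_convHom_le (hπ₁ : Function.Surjective π₁) (hπ₂ : Function.Surjective π₂)
    (g h : G₁ × G₂) :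
    wdist (convHom π₁ π₂) g h ≤ wdist π₁ g.1 h.1 + wdist π₂ g.2 h.2 := by
  have hπ := convHom_surjective hπ₁ hπ₂
  calc wdist (convHom π₁ π₂) g h
      ≤ wdist (convHom π₁ π₂) g (h.1, g.2) + wdist (convHom π₁ π₂) (h.1, g.2) h :=
        wdist_triangle hπ _ _ _
    _ = wdist (convHom π₁ π₂) (g.1, 1) (h.1, 1) + wdist (convHom π₁ π₂) (1, g.2) (1, h.2) := by
        congr 1 <;> apply wdist_congr <;> ext <;> simp
    _ ≤ wdist π₁ g.1 h.1 + wdist π₂ g.2 h.2 := by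
        gcongr
        · refine wdist_map_le hπ₁ (MonoidHom.inl G₁ G₂) (fun a => ?_) g.1 h.1
          exact Or.inl (Or.inl ⟨.inr (.inl a), by simp [convHom]⟩)
        · refine wdist_map_le hπ₂ (MonoidHom.inr G₁ G₂) (fun b => ?_) g.2 h.2
          exact Or.inl (Or.inl ⟨.inr (.inr b), by simp [convHom]⟩)

lemma FellowTravel.conv {N₁ N₂ : ℕ} {u₁ v₁ : List A} {u₂ v₂ : List B}
    (hπ₁ : Function.Surjective π₁) (hπ₂ : Function.Surjective π₂)
    (h₁ : FellowTravel π₁ N₁ u₁ v₁) (h₂ : FellowTravel π₂ N₂ u₂ v₂) :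
    FellowTravel (convHom π₁ π₂) ↑(N₁ + N₂) (conv u₁ u₂) (conv v₁ v₂) := fun n => by
  rw [conv_take, conv_take, evalW_conv, evalW_conv, Nat.cast_add]
  calc (wdist (convHom π₁ π₂) _ _ : ℝ≥0)
      ≤ ↑(wdist π₁ (evalW π₁ (u₁.take n)) (evalW π₁ (v₁.take n)) +
          wdist π₂ (evalW π₂ (u₂.take n)) (evalW π₂ (v₂.take n))) :=
        Nat.cast_le.mpr (wdist_convHom_le hπ₁ hπ₂ _ _)
    _ ≤ N₁ + N₂ := by
        rw [Nat.cast_add]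
        exact add_le_add (h₁ n) (h₂ n)

end ProductMetric

section ConvRegular

variable {A B : Type*}

def ConvAlphabet.fst? : ConvAlphabet A B → Option A
  | .inl (a, _) | .inr (.inl a) => some a
  | .inr (.inr _) => none

def ConvAlphabet.snd? : ConvAlphabet A B → Option B
  | .inl (_, b) | .inr (.inr b) => some b
  | .inr (.inl _) => none

@[simp]
lemma filterMap_fst?_conv (u : List A) (v : List B) :
    (conv u v).filterMap ConvAlphabet.fst? = u := by
  fun_induction conv u v <;> simp_all [ConvAlphabet.fst?]

@[simp]
lemma filterMap_snd?_conv (u : List A) (v : List B) :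
    (conv u v).filterMap ConvAlphabet.snd? = v := by
  fun_induction conv u v <;> simp_all [ConvAlphabet.snd?]

/-- The padding pattern `(A × B)* (A* ∪ B*)` of convolutions: state `some 0` while both words
run, `some 1` (`some 2`) once only the first (second) is left, `none` after a misplaced letter. -/
def convShapeStep : Option (Fin 3) → ConvAlphabet A B → Option (Fin 3)
  | some 0, .inl _ => some 0
  | some 0, .inr (.inl _) | some 1, .inr (.inl _) => some 1
  | some 0, .inr (.inr _) | some 2, .inr (.inr _) => some 2
  | _, _ => none

@[simps]
def convShapeDFA (A B : Type*) : DFA (ConvAlphabet A B) (Option (Fin 3)) where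
  step := convShapeStep
  start := some 0
  accept := {s | s.isSome}

lemma conv_eq_cons_inl_iff {u : List A} {v : List B} {a : A} {b : B} {w} :
    conv u v = .inl (a, b) :: w ↔ ∃ u' v', u = a :: u' ∧ v = b :: v' ∧ conv u' v' = w := by
  cases u <;> cases v <;> simp [conv, and_assoc]

lemma conv_eq_cons_inr_inl_iff {u : List A} {v : List B} {a : A} {w} :
    conv u v = .inr (.inl a) :: w ↔ ∃ u', u = a :: u' ∧ v = [] ∧ conv u' [] = w := by
  cases u <;> cases v <;> simp [conv, and_assoc]

lemma conv_eq_cons_inr_inr_iff {u : List A} {v : List B} {b : B} {w} :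
    conv u v = .inr (.inr b) :: w ↔ ∃ v', u = [] ∧ v = b :: v' ∧ conv [] v' = w := by
  cases u <;> cases v <;> simp [conv, and_assoc]

@[simp]
lemma convShapeDFA_evalFrom_none (w : List (ConvAlphabet A B)) :
    (convShapeDFA A B).evalFrom none w = none := by
  induction w with
  | nil => rfl
  | cons c w ih => exact ih

lemma isSome_convShapeDFA_evalFrom_one (w : List (ConvAlphabet A B)) :
    ((convShapeDFA A B).evalFrom (some 1) w).isSome ↔ ∃ u : List A, conv u ([] : List B) = w := by
  induction w with
  | nil => exact ⟨fun _ => ⟨[], by simp [conv]⟩, fun _ => rfl⟩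
  | cons c w ih =>
    rcases c with ⟨a, b⟩ | a | b <;>
      simp [DFA.evalFrom_cons, convShapeStep, conv_eq_cons_inl_iff, conv_eq_cons_inr_inl_iff,
        conv_eq_cons_inr_inr_iff, ih]

lemma isSome_convShapeDFA_evalFrom_two (w : List (ConvAlphabet A B)) :
    ((convShapeDFA A B).evalFrom (some 2) w).isSome ↔ ∃ v : List B, conv ([] : List A) v = w := by
  induction w with
  | nil => exact ⟨fun _ => ⟨[], by simp [conv]⟩, fun _ => rfl⟩
  | cons c w ih =>
    rcases c with ⟨a, b⟩ | a | b <;>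
      simp [DFA.evalFrom_cons, convShapeStep, conv_eq_cons_inl_iff, conv_eq_cons_inr_inl_iff,
        conv_eq_cons_inr_inr_iff, ih]

lemma mem_convShapeDFA_accepts {w : List (ConvAlphabet A B)} :
    w ∈ (convShapeDFA A B).accepts ↔ ∃ u v, conv u v = w := by
  change ((convShapeDFA A B).evalFrom (some 0) w).isSome ↔ _
  induction w with
  | nil => exact ⟨fun _ => ⟨[], [], by simp [conv]⟩, fun _ => rfl⟩
  | cons c w ih =>
    rcases c with ⟨a, b⟩ | a | b <;>
      simp [DFA.evalFrom_cons, convShapeStep, conv_eq_cons_inl_iff, conv_eq_cons_inr_inl_iff,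
        conv_eq_cons_inr_inr_iff, ih, isSome_convShapeDFA_evalFrom_one,
        isSome_convShapeDFA_evalFrom_two]

lemma convLang_eq (L₁ : Language A) (L₂ : Language B) :
    convLang L₁ L₂ = (convShapeDFA A B).accepts ⊓ {w | w.filterMap ConvAlphabet.fst? ∈ L₁} ⊓
      {w | w.filterMap ConvAlphabet.snd? ∈ L₂} := by
  refine Language.ext fun w => ?_
  change (∃ u ∈ L₁, ∃ v ∈ L₂, w = conv u v) ↔
    (w ∈ (convShapeDFA A B).accepts ∧ w.filterMap ConvAlphabet.fst? ∈ L₁) ∧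
      w.filterMap ConvAlphabet.snd? ∈ L₂
  rw [mem_convShapeDFA_accepts]
  constructor
  · rintro ⟨u, hu, v, hv, rfl⟩
    simpa using ⟨hu, hv⟩
  · rintro ⟨⟨⟨u, v, rfl⟩, hu⟩, hv⟩
    rw [filterMap_fst?_conv] at hu
    rw [filterMap_snd?_conv] at hv
    exact ⟨u, hu, v, hv, rfl⟩

lemma IsRegular.convLang {L₁ : Language A} {L₂ : Language B} (h₁ : IsRegular L₁)
    (h₂ : IsRegular L₂) : IsRegular (convLang L₁ L₂) := by
  rw [convLang_eq]
  exact (Language.IsRegular.inf ⟨_, inferInstance, _, rfl⟩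
    (Language.IsRegular.preimage_filterMap h₁ _)).inf (Language.IsRegular.preimage_filterMap h₂ _)

end ConvRegular

theorem IsAutomaticStructure.convLang {A B G₁ G₂ : Type*} [Group G₁] [Group G₂]
    {π₁ : FreeMonoid A →* G₁} {π₂ : FreeMonoid B →* G₂} {L₁ : Language A} {L₂ : Language B}
    (h₁ : IsAutomaticStructure π₁ L₁) (h₂ : IsAutomaticStructure π₂ L₂) :
    IsAutomaticStructure (convHom π₁ π₂) (convLang L₁ L₂) where
  regular := h₁.regular.convLang h₂.regular
  onto := by
    rintro ⟨g₁, g₂⟩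
    obtain ⟨u, hu, rfl⟩ := h₁.onto g₁
    obtain ⟨v, hv, rfl⟩ := h₂.onto g₂
    exact ⟨conv u v, ⟨u, hu, v, hv, rfl⟩, evalW_conv π₁ π₂ u v⟩
  ft := by
    obtain ⟨N₁, hN₁⟩ := h₁.ft
    obtain ⟨N₂, hN₂⟩ := h₂.ft
    refine ⟨N₁ + N₂, ?_⟩
    rintro _ ⟨u₁, hu₁, u₂, hu₂, rfl⟩ _ ⟨v₁, hv₁, v₂, hv₂, rfl⟩ hle
    have hπ := convHom_surjective h₁.surjective h₂.surjective
    rw [evalW_conv, evalW_conv] at hle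
    exact (hN₁ u₁ hu₁ v₁ hv₁ ((wdist_fst_le_wdist_convHom hπ _ _).trans hle)).conv
      h₁.surjective h₂.surjective (hN₂ u₂ hu₂ v₂ hv₂ ((wdist_snd_le_wdist_convHom hπ _ _).trans hle))

section Transport

variable {A A' G : Type*} [Group G] {π : FreeMonoid A →* G}

lemma gens_comp_map {f : A' → A} (hf : Function.Surjective f) :
    gens (π.comp (FreeMonoid.map f)) = gens π :=
  congrArg₂ (· ∪ ·) (hf.range_comp fun a => π (FreeMonoid.of a))
    (hf.range_comp fun a => (π (FreeMonoid.of a))⁻¹)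

lemma wdist_comp_map {f : A' → A} (hf : Function.Surjective f) (g h : G) :
    wdist (π.comp (FreeMonoid.map f)) g h = wdist π g h := by
  rw [wdist, wdist, gens_comp_map hf]

lemma evalW_comp_map (f : A' → A) (w : List A') :
    evalW (π.comp (FreeMonoid.map f)) w = evalW π (w.map f) := rfl

lemma IsAutomaticStructure.comp_map_equiv {L : Language A} (h : IsAutomaticStructure π L)
    (e : A' ≃ A) : IsAutomaticStructure (π.comp (FreeMonoid.map e)) {w | w.map e ∈ L} where
  regular := by
    obtain ⟨σ, _, M, hM⟩ := h.regular
    exact ⟨σ, ‹_›, M.comap e, by rw [DFA.accepts_comap, hM]; rfl⟩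
  onto g := by
    obtain ⟨w, hw, rfl⟩ := h.onto g
    exact ⟨w.map e.symm, show (w.map e.symm).map e ∈ L by simpa using hw, by simp [evalW_comp_map]⟩
  ft := by
    obtain ⟨N, hN⟩ := h.ft
    refine ⟨N, fun u hu v hv huv n => ?_⟩
    simp only [wdist_comp_map e.surjective, evalW_comp_map] at huv ⊢
    simpa [List.map_take] using hN _ hu _ hv huv n

lemma IsAutomaticStructure.isAutomaticGroup [Finite A] {L : Language A}
    (h : IsAutomaticStructure π L) : IsAutomaticGroup G := by
  obtain ⟨n, ⟨e⟩⟩ := Finite.exists_equiv_fin A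
  exact ⟨Fin n, inferInstance, _, _, h.comp_map_equiv e.symm⟩

end Transport

end Auto

theorem conv_automatic_general {A B G₁ G₂ : Type*} [Fintype A] [Fintype B] [Group G₁] [Group G₂]
    (π₁ : FreeMonoid A →* G₁) (π₂ : FreeMonoid B →* G₂)
    (L₁ : Language A) (L₂ : Language B)
    (h₁ : IsAutomaticStructure π₁ L₁) (h₂ : IsAutomaticStructure π₂ L₂) :
    IsAutomaticStructure (convHom π₁ π₂) (convLang L₁ L₂) ∧
      IsAutomaticGroup (G₁ × G₂) :=
  ⟨h₁.convLang h₂, (h₁.convLang h₂).isAutomaticGroup⟩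

/-- The convolution `L₁ ⋄ L₂` is an automatic structure for the natural map
`C* → G₁ × G₂`; in particular the direct product of automatic groups is automatic. -/
theorem conv_automatic {A B G₁ G₂ : Type*} [Fintype A] [Fintype B] [Group G₁] [Group G₂]
    (π₁ : FreeMonoid A →* G₁) (hπ₁ : Function.Surjective π₁)
    (π₂ : FreeMonoid B →* G₂) (hπ₂ : Function.Surjective π₂)
    (L₁ : Language A) (L₂ : Language B)
    (h₁ : IsAutomaticStructure π₁ L₁) (h₂ : IsAutomaticStructure π₂ L₂) :
    IsAutomaticStructure (convHom π₁ π₂) (convLang L₁ L₂) ∧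
      IsAutomaticGroup (G₁ × G₂) :=
  conv_automatic_general π₁ π₂ L₁ L₂ h₁ h₂
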